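/- Let n ≥ 2 and let Δ ⊂ ℝ^n be the root system of the strange Lie superalgebra p(n), namely Δ := {ε_i − ε_j : i ≠ j} ∪ {±(ε_i + ε_j) : i < j} ∪ {2ε_i : 1 ≤ i ≤ n}. Consider P := {ε_i − ε_j : i < j} ∪ {ε_i + ε_j : i < j} ∪ {2ε_i : 1 ≤ i ≤ n} ⊆ Δ. Then: (a) under the identification of a linear functional Λ : ℝ^n → ℝ with the vector (Λ(ε₁), …, Λ(ε_n)) ∈ ℝ^n, the polyhedron F(P) := {Λ : Λ(α) ≥ 0 for all α ∈ P and Λ(α) < 0 for all α ∈ Δ ∖ P} equals {x ∈ ℝ^n : x₁ > x₂ > ⋯ > x_n ≥ 0}; in particular F(P) ≠ ∅ and P is a (principal) parabolic set of roots of Δ; (b) the Levi components of P, taken over all parabolic sets P̃ of Δ ∪ (−Δ) with P̃ ∩ Δ = P, are exactly the two sets ∅ and {2ε_n}. -/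

import Mathlib

open Pointwise

/-- A subset `Pt` of a symmetric set `Φ` (`Φ = -Φ`) is a parabolic set if it is proper,
`Φ = Pt ∪ (-Pt)`, and `Pt` is closed under sums lying in `Φ`. -/
def IsParabolicIn {V : Type*} [AddCommGroup V] (Φ Pt : Set V) : Prop :=
  Pt ⊂ Φ ∧ Φ = Pt ∪ (-Pt) ∧ ∀ α ∈ Pt, ∀ β ∈ Pt, α + β ∈ Φ → α + β ∈ Pt

/-- A proper subset `P` of `Δ` is a parabolic set of roots if `P = Pt ∩ Δ` for some
parabolic set `Pt` of `Δ ∪ (-Δ)`. -/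
def IsParabolicRoots {V : Type*} [AddCommGroup V] (Δ P : Set V) : Prop :=
  P ⊂ Δ ∧ ∃ Pt, IsParabolicIn (Δ ∪ -Δ) Pt ∧ P = Pt ∩ Δ

namespace Pn

variable {n : ℕ}

noncomputable def ε (i : Fin n) : Fin n → ℝ := Pi.single i 1

/-- The root system of the strange Lie superalgebra `p(n)`. -/
noncomputable def Δroot (n : ℕ) : Set (Fin n → ℝ) :=
  {v | ∃ i j : Fin n, i ≠ j ∧ v = ε i - ε j} ∪
  {v | ∃ i j : Fin n, i < j ∧ (v = ε i + ε j ∨ v = -(ε i + ε j))} ∪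
  {v | ∃ i : Fin n, v = (2 : ℝ) • ε i}

/-- The parabolic set `P`. -/
noncomputable def Ppar (n : ℕ) : Set (Fin n → ℝ) :=
  {v | ∃ i j : Fin n, i < j ∧ v = ε i - ε j} ∪
  {v | ∃ i j : Fin n, i < j ∧ v = ε i + ε j} ∪
  {v | ∃ i : Fin n, v = (2 : ℝ) • ε i}

/-- The polyhedron `F(P)`, with a linear functional `Λ` identified with the vector
`(Λ(ε₁), …, Λ(ε_n))`, so that `Λ(α) = Σᵢ xᵢ αᵢ`. -/
noncomputable def FP (n : ℕ) (P : Set (Fin n → ℝ)) : Set (Fin n → ℝ) :=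
  {x | (∀ α ∈ P, 0 ≤ ∑ i, x i * α i) ∧ (∀ α ∈ Δroot n \ P, (∑ i, x i * α i) < 0)}

end Pn

/-!
A strictly decreasing `x` with `xₙ ≥ 0` pairs nonnegatively with `P` and negatively with `Δ ∖ P`;
conversely `εⱼ - εᵢ ∈ Δ ∖ P` (`i < j`) and `2εₙ ∈ P` force these conditions. This gives `F(P)`, and
each `x ∈ F(P)` cuts out the parabolic set `{α ∈ Φ | 0 ≤ Λₓ(α)}` of `Φ = Δ ∪ -Δ`, with trace `P`.
Since `Φ ∖ Δ = {-2εᵢ}`, a parabolic `P̃` with `P̃ ∩ Δ = P` can only add some `-2εᵢ`, and only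
`-2εₙ`: for `i < n`, closedness applied to `εᵢ + εₙ ∈ P` would put `εₙ - εᵢ` into `P`. As a
positive decreasing `x` is positive on `P`, `P ∩ -P = ∅`, so the Levi component is `{2εₙ}` or `∅`
according as `-2εₙ ∈ P̃` or not; both occur, for `x = (n - i + c)ᵢ` with `c = 0` resp. `c = 1`.
-/

theorem isParabolicIn_setOf_nonneg {V M : Type*} [AddCommGroup V] [AddCommGroup M] [LinearOrder M]
    [IsOrderedAddMonoid M] {Φ : Set V} (hΦ : -Φ = Φ) (f : V →+ M) {γ : V} (hγ : γ ∈ Φ)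
    (hfγ : f γ < 0) : IsParabolicIn Φ {α ∈ Φ | 0 ≤ f α} := by
  refine ⟨Set.ssubset_iff_of_subset (Set.sep_subset _ _) |>.mpr ⟨γ, hγ, fun h => h.2.not_gt hfγ⟩,
    ?_, fun α hα β hβ hαβ => ⟨hαβ, by rw [map_add]; exact add_nonneg hα.2 hβ.2⟩⟩
  refine (Set.union_subset (Set.sep_subset _ _) ?_).antisymm' fun α hα => ?_
  · exact (Set.neg_subset_neg.mpr (Set.sep_subset _ _)).trans hΦ.subset
  · rcases le_or_gt 0 (f α) with hf | hf
    · exact Or.inl ⟨hα, hf⟩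
    · refine Or.inr ⟨hΦ ▸ Set.neg_mem_neg.mpr hα, ?_⟩
      rw [map_neg]
      exact neg_nonneg.mpr hf.le

namespace Pn

variable {n : ℕ}

@[simp]
lemma dotProduct_ε (x : Fin n → ℝ) (i : Fin n) : x ⬝ᵥ ε i = x i := by
  simp [ε, dotProduct_single]

lemma sub_mem_Δroot {i j : Fin n} (h : i ≠ j) : ε i - ε j ∈ Δroot n :=
  Or.inl (Or.inl ⟨i, j, h, rfl⟩)

lemma add_mem_Δroot {i j : Fin n} (h : i < j) : ε i + ε j ∈ Δroot n :=
  Or.inl (Or.inr ⟨i, j, h, Or.inl rfl⟩)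

lemma neg_add_mem_Δroot {i j : Fin n} (h : i < j) : -(ε i + ε j) ∈ Δroot n :=
  Or.inl (Or.inr ⟨i, j, h, Or.inr rfl⟩)

lemma two_smul_mem_Δroot (i : Fin n) : (2 : ℝ) • ε i ∈ Δroot n := Or.inr ⟨i, rfl⟩

lemma sub_mem_Ppar {i j : Fin n} (h : i < j) : ε i - ε j ∈ Ppar n :=
  Or.inl (Or.inl ⟨i, j, h, rfl⟩)

lemma add_mem_Ppar {i j : Fin n} (h : i < j) : ε i + ε j ∈ Ppar n :=
  Or.inl (Or.inr ⟨i, j, h, rfl⟩)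

lemma two_smul_mem_Ppar (i : Fin n) : (2 : ℝ) • ε i ∈ Ppar n := Or.inr ⟨i, rfl⟩

lemma Ppar_subset_Δroot : Ppar n ⊆ Δroot n := by
  rintro v ((⟨i, j, hij, rfl⟩ | ⟨i, j, hij, rfl⟩) | ⟨i, rfl⟩)
  · exact sub_mem_Δroot hij.ne
  · exact add_mem_Δroot hij
  · exact two_smul_mem_Δroot i

lemma neg_Δroot_subset : -Δroot n ⊆ Δroot n ∪ Set.range fun i => -((2 : ℝ) • ε i) := by
  intro v hv
  rcases Set.mem_neg.mp hv with (⟨i, j, hij, h⟩ | ⟨i, j, hij, h | h⟩) | ⟨i, h⟩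
  all_goals rw [neg_eq_iff_eq_neg] at h; subst h
  · exact Or.inl (by rw [neg_sub]; exact sub_mem_Δroot hij.symm)
  · exact Or.inl (neg_add_mem_Δroot hij)
  · exact Or.inl (by rw [neg_neg]; exact add_mem_Δroot hij)
  · exact Or.inr ⟨i, rfl⟩

lemma union_neg_Δroot_subset :
    Δroot n ∪ -Δroot n ⊆ Δroot n ∪ Set.range fun i => -((2 : ℝ) • ε i) :=
  Set.union_subset Set.subset_union_left neg_Δroot_subset

lemma dotProduct_nonneg_of_mem_Ppar {x v : Fin n → ℝ} (hx : StrictAnti x) (hx0 : ∀ i, 0 ≤ x i)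
    (hv : v ∈ Ppar n) : 0 ≤ x ⬝ᵥ v := by
  rcases hv with (⟨i, j, hij, rfl⟩ | ⟨i, j, hij, rfl⟩) | ⟨i, rfl⟩
  · simpa [dotProduct_sub] using (hx hij).le
  · simpa [dotProduct_add] using add_nonneg (hx0 i) (hx0 j)
  · simpa [dotProduct_smul] using hx0 i

lemma dotProduct_pos_of_mem_Ppar {x v : Fin n → ℝ} (hx : StrictAnti x) (hx0 : ∀ i, 0 < x i)
    (hv : v ∈ Ppar n) : 0 < x ⬝ᵥ v := by
  rcases hv with (⟨i, j, hij, rfl⟩ | ⟨i, j, hij, rfl⟩) | ⟨i, rfl⟩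
  · simpa [dotProduct_sub] using hx hij
  · simpa [dotProduct_add] using add_pos (hx0 i) (hx0 j)
  · simpa [dotProduct_smul] using hx0 i

noncomputable def stair (n : ℕ) (c : ℝ) (i : Fin n) : ℝ := c + (i.rev : ℕ)

lemma stair_strictAnti (c : ℝ) : StrictAnti (stair n c) := fun i j hij => by
  simpa [stair] using Fin.rev_lt_rev.mpr hij

lemma stair_pos {c : ℝ} (hc : 0 < c) (i : Fin n) : 0 < stair n c i := by
  unfold stair
  positivity

lemma stair_last (hn : 0 < n) (c : ℝ) : stair n c ⟨n - 1, by omega⟩ = c := by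
  simp [stair, Fin.val_rev]
  omega

lemma sub_notMem_Ppar {i j : Fin n} (h : i < j) : ε j - ε i ∉ Ppar n := fun hP => by
  have := dotProduct_pos_of_mem_Ppar (stair_strictAnti 1) (stair_pos one_pos) hP
  simp only [dotProduct_sub, dotProduct_ε] at this
  linarith [stair_strictAnti 1 h]

lemma neg_notMem_Ppar {v : Fin n → ℝ} (hv : v ∈ Ppar n) : -v ∉ Ppar n := fun hP => by
  have h := dotProduct_pos_of_mem_Ppar (stair_strictAnti 1) (stair_pos one_pos) hP
  rw [dotProduct_neg, neg_pos] at h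
  exact lt_asymm h (dotProduct_pos_of_mem_Ppar (stair_strictAnti 1) (stair_pos one_pos) hv)

theorem FP_Ppar_eq (hn : 0 < n) :
    FP n (Ppar n) = {x | (∀ i j : Fin n, i < j → x j < x i) ∧ 0 ≤ x ⟨n - 1, by omega⟩} := by
  ext x
  change ((∀ α ∈ Ppar n, 0 ≤ x ⬝ᵥ α) ∧ ∀ α ∈ Δroot n \ Ppar n, x ⬝ᵥ α < 0) ↔ _
  constructor
  · rintro ⟨hP, hΔ⟩
    refine ⟨fun i j hij => ?_, ?_⟩
    · simpa [dotProduct_sub] using hΔ _ ⟨sub_mem_Δroot hij.ne', sub_notMem_Ppar hij⟩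
    · simpa [dotProduct_smul] using hP _ (two_smul_mem_Ppar ⟨n - 1, by omega⟩)
  · rintro ⟨hx, hlast⟩
    have hx : StrictAnti x := fun i j hij => hx i j hij
    have hx0 (i : Fin n) : 0 ≤ x i :=
      hlast.trans (hx.antitone (Fin.le_iff_val_le_val.mpr (Nat.le_sub_one_of_lt i.isLt)))
    refine ⟨fun α hα => dotProduct_nonneg_of_mem_Ppar hx hx0 hα, ?_⟩
    rintro α ⟨(⟨i, j, hij, rfl⟩ | ⟨i, j, hij, rfl | rfl⟩) | ⟨i, rfl⟩, hP⟩
    · rcases hij.lt_or_gt with hij | hij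
      · exact absurd (sub_mem_Ppar hij) hP
      · simpa [dotProduct_sub] using hx hij
    · exact absurd (add_mem_Ppar hij) hP
    · simp only [dotProduct_neg, dotProduct_add, dotProduct_ε, neg_neg_iff_pos]
      linarith [hx hij, hx0 j]
    · exact absurd (two_smul_mem_Ppar i) hP

lemma stair_mem_FP (hn : 0 < n) {c : ℝ} (hc : 0 ≤ c) : stair n c ∈ FP n (Ppar n) := by
  rw [FP_Ppar_eq hn]
  exact ⟨fun i j hij => stair_strictAnti c hij, (stair_last hn c).symm ▸ hc⟩

def parabolicSet (x : Fin n → ℝ) : Set (Fin n → ℝ) := {α ∈ Δroot n ∪ -Δroot n | 0 ≤ x ⬝ᵥ α}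

lemma isParabolicIn_parabolicSet (hn : 2 ≤ n) {x : Fin n → ℝ} (hx : x ∈ FP n (Ppar n)) :
    IsParabolicIn (Δroot n ∪ -Δroot n) (parabolicSet x) := by
  have h01 : (⟨0, by omega⟩ : Fin n) < ⟨1, by omega⟩ := Fin.mk_lt_mk.mpr one_pos
  refine isParabolicIn_setOf_nonneg ?_ (AddMonoidHom.mk' (x ⬝ᵥ ·) (dotProduct_add x))
    (Or.inl (sub_mem_Δroot h01.ne')) (hx.2 _ ⟨sub_mem_Δroot h01.ne', sub_notMem_Ppar h01⟩)
  rw [Set.union_neg, neg_neg, Set.union_comm]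

lemma parabolicSet_inter_Δroot {x : Fin n → ℝ} (hx : x ∈ FP n (Ppar n)) :
    parabolicSet x ∩ Δroot n = Ppar n := by
  ext α
  refine ⟨fun ⟨⟨_, hα⟩, hΔ⟩ => ?_, fun hP => ⟨⟨Or.inl (Ppar_subset_Δroot hP), hx.1 α hP⟩,
    Ppar_subset_Δroot hP⟩⟩
  by_contra hP
  exact (hx.2 α ⟨hΔ, hP⟩).not_ge hα

lemma neg_two_smul_mem_parabolicSet_iff {x : Fin n → ℝ} {i : Fin n} :
    -((2 : ℝ) • ε i) ∈ parabolicSet x ↔ x i ≤ 0 := by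
  have hΦ : -((2 : ℝ) • ε i) ∈ Δroot n ∪ -Δroot n :=
    Or.inr (Set.neg_mem_neg.mpr (two_smul_mem_Δroot i))
  rw [parabolicSet, Set.mem_sep_iff, and_iff_right hΦ, dotProduct_neg, dotProduct_smul,
    dotProduct_ε, smul_eq_mul, neg_nonneg]
  constructor <;> intro <;> linarith

section Levi

variable {Pt : Set (Fin n → ℝ)} (hPt : IsParabolicIn (Δroot n ∪ -Δroot n) Pt)
  (hPtΔ : Pt ∩ Δroot n = Ppar n)
include hPt hPtΔ

lemma val_eq_of_neg_two_smul_mem {i : Fin n} (hi : -((2 : ℝ) • ε i) ∈ Pt) : (i : ℕ) = n - 1 := by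
  by_contra hne
  set l : Fin n := ⟨n - 1, by omega⟩
  have hil : i < l := Fin.mk_lt_mk.mpr (by omega)
  have hsum : -((2 : ℝ) • ε i) + (ε i + ε l) = ε l - ε i := by
    rw [two_smul]
    abel
  have hmem := hPt.2.2 _ hi _ (hPtΔ.ge (add_mem_Ppar hil)).1
    (hsum ▸ Or.inl (sub_mem_Δroot hil.ne'))
  rw [hsum] at hmem
  exact sub_notMem_Ppar hil (hPtΔ.le ⟨hmem, sub_mem_Δroot hil.ne'⟩)

lemma mem_leviComponent_iff (hn : 0 < n) {α : Fin n → ℝ} :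
    α ∈ Pt ∩ -Pt ∩ Δroot n ↔ α = (2 : ℝ) • ε (⟨n - 1, by omega⟩ : Fin n) ∧
      -((2 : ℝ) • ε (⟨n - 1, by omega⟩ : Fin n)) ∈ Pt := by
  refine ⟨fun ⟨⟨hα, hnegα⟩, hΔ⟩ => ?_, ?_⟩
  · have hP : α ∈ Ppar n := hPtΔ.le ⟨hα, hΔ⟩
    rcases union_neg_Δroot_subset (hPt.1.1 hnegα) with hnegΔ | ⟨i, hi⟩
    · exact absurd (hPtΔ.le ⟨hnegα, hnegΔ⟩) (neg_notMem_Ppar hP)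
    · obtain rfl : α = (2 : ℝ) • ε i := neg_injective hi.symm
      obtain rfl : i = ⟨n - 1, by omega⟩ :=
        Fin.ext (val_eq_of_neg_two_smul_mem hPt hPtΔ (hi ▸ hnegα))
      exact ⟨rfl, hi ▸ hnegα⟩
  · rintro ⟨rfl, h⟩
    exact ⟨⟨(hPtΔ.ge (two_smul_mem_Ppar _)).1, h⟩, two_smul_mem_Δroot _⟩

end Levi

lemma isParabolicRoots_Ppar (hn : 2 ≤ n) : IsParabolicRoots (Δroot n) (Ppar n) := by
  have hx := stair_mem_FP (n := n) (by omega) le_rfl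
  have h01 : (⟨0, by omega⟩ : Fin n) < ⟨1, by omega⟩ := Fin.mk_lt_mk.mpr one_pos
  exact ⟨Set.ssubset_iff_of_subset Ppar_subset_Δroot |>.mpr
    ⟨_, sub_mem_Δroot h01.ne', sub_notMem_Ppar h01⟩,
    _, isParabolicIn_parabolicSet hn hx, (parabolicSet_inter_Δroot hx).symm⟩

lemma mem_leviComponent_parabolicSet_iff (hn : 2 ≤ n) {x : Fin n → ℝ} (hx : x ∈ FP n (Ppar n))
    {α : Fin n → ℝ} : α ∈ parabolicSet x ∩ -parabolicSet x ∩ Δroot n ↔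
      α = (2 : ℝ) • ε ⟨n - 1, Nat.sub_one_lt_of_lt hn⟩ ∧
        x ⟨n - 1, Nat.sub_one_lt_of_lt hn⟩ ≤ 0 := by
  rw [mem_leviComponent_iff (isParabolicIn_parabolicSet hn hx) (parabolicSet_inter_Δroot hx)
    (by omega), neg_two_smul_mem_parabolicSet_iff]

end Pn

theorem stmt_19 (n : ℕ) (hn : 2 ≤ n) :
    -- (a)
    (Pn.FP n (Pn.Ppar n) =
      {x : Fin n → ℝ | (∀ i j : Fin n, i < j → x j < x i) ∧ 0 ≤ x ⟨n - 1, by omega⟩} ∧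
     (Pn.FP n (Pn.Ppar n)).Nonempty ∧
     IsParabolicRoots (Pn.Δroot n) (Pn.Ppar n)) ∧
    -- (b)
    ({L : Set (Fin n → ℝ) |
        ∃ Pt, IsParabolicIn (Pn.Δroot n ∪ -Pn.Δroot n) Pt ∧ Pt ∩ Pn.Δroot n = Pn.Ppar n ∧
          L = Pt ∩ (-Pt) ∩ Pn.Δroot n} =
      {∅, {(2 : ℝ) • Pn.ε ⟨n - 1, by omega⟩}}) := by
  have hn0 : 0 < n := by omega
  refine ⟨⟨Pn.FP_Ppar_eq hn0, ⟨_, Pn.stair_mem_FP hn0 le_rfl⟩, Pn.isParabolicRoots_Ppar hn⟩, ?_⟩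
  ext L
  refine ⟨?_, ?_⟩
  · rintro ⟨Pt, hPt, hPtΔ, rfl⟩
    by_cases h : -((2 : ℝ) • Pn.ε (⟨n - 1, by omega⟩ : Fin n)) ∈ Pt
    · exact Or.inr (Set.ext fun α => by simp [Pn.mem_leviComponent_iff hPt hPtΔ hn0, h])
    · exact Or.inl (Set.ext fun α => by simp [Pn.mem_leviComponent_iff hPt hPtΔ hn0, h])
  · rintro (rfl | rfl)
    · have hx := Pn.stair_mem_FP hn0 zero_le_one
      refine ⟨_, Pn.isParabolicIn_parabolicSet hn hx, Pn.parabolicSet_inter_Δroot hx, ?_⟩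
      ext α
      simp [Pn.mem_leviComponent_parabolicSet_iff hn hx, Pn.stair_last hn0]
    · have hx := Pn.stair_mem_FP hn0 le_rfl
      refine ⟨_, Pn.isParabolicIn_parabolicSet hn hx, Pn.parabolicSet_inter_Δroot hx, ?_⟩
      ext α
      simp [Pn.mem_leviComponent_parabolicSet_iff hn hx, Pn.stair_last hn0]
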